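/- The 2-sphere is unicoherent: if A and B are closed connected subsets of the unit sphere S² in three-dimensional Euclidean space with A ∪ B = S², then A ∩ B is connected. -/

import Mathlib

/-!
A continuous nonvanishing function on the unit sphere `S` of `E` (`dim E ≥ 3`) has a continuous
logarithm. By stereographic projection, the complements of two antipodal points are homeomorphic
to a vector space, so on each of them the function lifts through the covering map `exp`. Their
overlap is that vector space minus a point, which is connected as its dimension is `≥ 2`, so the
two lifts differ there by a single constant in `2πiℤ` and can be glued.

Now let `A ∪ B = S` with `A`, `B` closed and connected, and suppose `A ∩ B` splits into disjoint
closed pieces `F₀`, `F₁`. With an Urysohn function `u` (`0` on `F₀`, `1` on `F₁`), the map equal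
to `exp (iπu)` on `A` and to `exp (-iπu)` on `B` is well defined and continuous. Its logarithm `h`
is `iπu` plus a constant on `A` and `-iπu` plus a constant on `B`; comparing these at points of
`F₀` and `F₁` gives `2πi = 0`.
-/

open Complex Metric Module Real Set

section Logarithms

variable {X : Type*} [TopologicalSpace X]

def HasContinuousLogOn (f : X → ℂ) (s : Set X) : Prop :=
  ∃ h : X → ℂ, ContinuousOn h s ∧ ∀ x ∈ s, exp (h x) = f x

theorem IsPreconnected.exists_eq_add_int_mul_two_pi_I_of_exp_eq {s : Set X}
    (hs : IsPreconnected s) {φ ψ : X → ℂ} (hφ : ContinuousOn φ s) (hψ : ContinuousOn ψ s)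
    (h : ∀ x ∈ s, exp (φ x) = exp (ψ x)) :
    ∃ n : ℤ, ∀ x ∈ s, φ x = ψ x + n * (2 * π * I) := by
  have hT : IsDiscrete (AddSubgroup.zmultiples (2 * π * I) : Set ℂ) :=
    isDiscrete_iff_discreteTopology.mpr (NormedSpace.discreteTopology_zmultiples _)
  have hmaps : MapsTo (φ - ψ) s (AddSubgroup.zmultiples (2 * π * I)) := fun x hx ↦ by
    obtain ⟨n, hn⟩ := exp_eq_exp_iff_exists_int.mp (h x hx)
    exact ⟨n, by simp [hn]⟩
  obtain ⟨_, ⟨n, rfl⟩, hconst⟩ :=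
    hs.eqOn_const_of_mapsTo hT (hφ.sub hψ) hmaps ⟨0, zero_mem _⟩
  refine ⟨n, fun x hx ↦ ?_⟩
  have := hconst hx
  simp only [Pi.sub_apply, Function.const_apply, zsmul_eq_mul] at this
  rw [← this]; ring

theorem hasContinuousLogOn_of_domRestrict {s : Set X} {f : X → ℂ}
    (h : HasContinuousLogOn (s.domRestrict f) univ) : HasContinuousLogOn f s := by
  classical
  obtain ⟨h, hc, he⟩ := h
  refine ⟨fun x ↦ if hx : x ∈ s then h ⟨x, hx⟩ else 0, ?_, fun x hx ↦ ?_⟩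
  · rw [continuousOn_iff_continuous_domRestrict]
    exact (continuousOn_univ.mp hc).congr fun x ↦ by simp [x.2]
  · simpa [hx] using he ⟨x, hx⟩ trivial

theorem hasContinuousLogOn_of_simplyConnectedSpace {s : Set X} [SimplyConnectedSpace s]
    [LocallyPathConnectedSpace s] {f : X → ℂ} (hf : ContinuousOn f s) (hf0 : ∀ x ∈ s, f x ≠ 0) :
    HasContinuousLogOn f s := by
  obtain ⟨a₀⟩ := (inferInstance : Nonempty s)
  obtain ⟨F, ⟨-, hF⟩, -⟩ := isCoveringMapOn_exp.existsUnique_continuousMap_lifts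
    ⟨s.domRestrict f, hf.domRestrict⟩ (exp_log (hf0 a₀ a₀.2)) fun a ↦ hf0 a a.2
  exact hasContinuousLogOn_of_domRestrict ⟨F, F.continuous.continuousOn, fun a _ ↦ congrFun hF a⟩

theorem HasContinuousLogOn.union_of_isOpen {U V : Set X} {f : X → ℂ} (hU : IsOpen U)
    (hV : IsOpen V) (hUV : IsPreconnected (U ∩ V)) (hfU : HasContinuousLogOn f U)
    (hfV : HasContinuousLogOn f V) : HasContinuousLogOn f (U ∪ V) := by
  classical
  obtain ⟨hu, hu_cont, hu_exp⟩ := hfU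
  obtain ⟨hv, hv_cont, hv_exp⟩ := hfV
  obtain ⟨n, hn⟩ := hUV.exists_eq_add_int_mul_two_pi_I_of_exp_eq (hu_cont.mono inter_subset_left)
    (hv_cont.mono inter_subset_right) fun x hx ↦ by rw [hu_exp x hx.1, hv_exp x hx.2]
  set hv' : X → ℂ := fun x ↦ hv x + n * (2 * π * I)
  have hv'_exp : ∀ x ∈ V, exp (hv' x) = f x := fun x hx ↦ by
    simp only [hv', Complex.exp_add, exp_int_mul_two_pi_mul_I, mul_one, hv_exp x hx]
  have hv'_eq : EqOn (U.piecewise hu hv') hv' V := fun x hx ↦ by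
    by_cases hxU : x ∈ U
    · rw [piecewise_eq_of_mem _ _ _ hxU, hn x ⟨hxU, hx⟩]
    · rw [piecewise_eq_of_notMem _ _ _ hxU]
  refine ⟨U.piecewise hu hv', ?_, fun x hx ↦ ?_⟩
  · exact ContinuousOn.union_of_isOpen
      (hu_cont.congr fun x hx ↦ piecewise_eq_of_mem _ _ _ hx)
      ((hv_cont.add continuousOn_const).congr hv'_eq) hU hV
  · by_cases hxU : x ∈ U
    · rw [piecewise_eq_of_mem _ _ _ hxU, hu_exp x hxU]
    · rw [hv'_eq (hx.resolve_left hxU), hv'_exp x (hx.resolve_left hxU)]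

theorem isPreconnected_inter_of_hasContinuousLogOn_union [NormalSpace X] {A B : Set X}
    (hA : IsClosed A) (hB : IsClosed B) (hAc : IsPreconnected A) (hBc : IsPreconnected B)
    (hlog : ∀ f : X → ℂ, ContinuousOn f (A ∪ B) → (∀ x ∈ A ∪ B, f x ≠ 0) →
      HasContinuousLogOn f (A ∪ B)) :
    IsPreconnected (A ∩ B) := by
  classical
  rw [isPreconnected_closed_iff]
  intro F₀ F₁ hF₀ hF₁ hsub ⟨x₀, hx₀, hx₀F⟩ ⟨x₁, hx₁, hx₁F⟩
  by_contra hdisj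
  obtain ⟨u, hu₀, hu₁, -⟩ := exists_continuous_zero_one_of_isClosed
    ((hA.inter hB).inter hF₀) ((hA.inter hB).inter hF₁)
    (disjoint_left.mpr fun x hx hx' ↦ hdisj ⟨x, hx.1, hx.2, hx'.2⟩)
  set θ : X → ℂ := fun x ↦ π * u x * I
  have hθ : Continuous θ := by fun_prop
  -- `u ∈ {0, 1}` on `A ∩ B`, so there `exp (iπu) = ±1 = exp (-iπu)`
  have hagree : ∀ x ∈ A ∩ B, exp (θ x) = exp (-θ x) := fun x hx ↦ by
    rcases hsub hx with hx' | hx'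
    · simp [θ, hu₀ ⟨hx, hx'⟩]
    · simp [θ, hu₁ ⟨hx, hx'⟩, Complex.exp_neg, exp_pi_mul_I]
  set g := A.piecewise (fun x ↦ exp (θ x)) (fun x ↦ exp (-θ x))
  have hgA : EqOn g (fun x ↦ exp (θ x)) A := fun x hx ↦ piecewise_eq_of_mem _ _ _ hx
  have hgB : EqOn g (fun x ↦ exp (-θ x)) B := fun x hx ↦ by
    by_cases hxA : x ∈ A
    · simp only [g, piecewise_eq_of_mem _ _ _ hxA, hagree x ⟨hxA, hx⟩]
    · simp only [g, piecewise_eq_of_notMem _ _ _ hxA]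
  have hg : ContinuousOn g (A ∪ B) :=
    ((by fun_prop : Continuous fun x ↦ exp (θ x)).continuousOn.congr hgA).union_of_isClosed
      ((by fun_prop : Continuous fun x ↦ exp (-θ x)).continuousOn.congr hgB) hA hB
  have hg0 : ∀ x ∈ A ∪ B, g x ≠ 0 := by
    rintro x (hx | hx)
    · rw [hgA hx]; exact exp_ne_zero _
    · rw [hgB hx]; exact exp_ne_zero _
  obtain ⟨h, hh, hexp⟩ := hlog g hg hg0
  obtain ⟨m, hm⟩ := hAc.exists_eq_add_int_mul_two_pi_I_of_exp_eq (hh.mono subset_union_left)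
    hθ.continuousOn fun x hx ↦ (hexp x (.inl hx)).trans (hgA hx)
  obtain ⟨k, hk⟩ := hBc.exists_eq_add_int_mul_two_pi_I_of_exp_eq (hh.mono subset_union_right)
    hθ.neg.continuousOn fun x hx ↦ (hexp x (.inr hx)).trans (hgB hx)
  simp only [Pi.neg_apply] at hk
  have hθ₀ : θ x₀ = 0 := by simp [θ, hu₀ ⟨hx₀, hx₀F⟩]
  have hθ₁ : θ x₁ = π * I := by simp [θ, hu₁ ⟨hx₁, hx₁F⟩]
  have : (2 * π * I : ℂ) = 0 := by
    linear_combination hk x₁ hx₁.2 - hm x₁ hx₁.1 - hk x₀ hx₀.2 + hm x₀ hx₀.1 - 2 * hθ₁ + 2 * hθ₀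
  simp [pi_ne_zero, I_ne_zero] at this

end Logarithms

section Sphere

variable {E : Type*} [NormedAddCommGroup E] [InnerProductSpace ℝ E]

noncomputable def stereographicHomeomorph (v : sphere (0 : E) 1) :
    ({v}ᶜ : Set (sphere (0 : E) 1)) ≃ₜ (ℝ ∙ (v : E))ᗮ :=
  (stereographic (norm_eq_of_mem_sphere v)).toHomeomorphSourceTarget.trans (Homeomorph.Set.univ _)

instance simplyConnectedSpace_compl_singleton_sphere (v : sphere (0 : E) 1) :
    SimplyConnectedSpace ({v}ᶜ : Set (sphere (0 : E) 1)) :=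
  (stereographicHomeomorph v).toHomotopyEquiv.simplyConnectedSpace

instance locallyPathConnectedSpace_compl_singleton_sphere (v : sphere (0 : E) 1) :
    LocallyPathConnectedSpace ({v}ᶜ : Set (sphere (0 : E) 1)) :=
  (stereographicHomeomorph v).isOpenEmbedding.locallyPathConnectedSpace

theorem isPreconnected_sphere_compl_antipodal_pair [FiniteDimensional ℝ E]
    (hE : 2 < finrank ℝ E) (v : sphere (0 : E) 1) :
    IsPreconnected ({v}ᶜ ∩ {-v}ᶜ : Set (sphere (0 : E) 1)) := by
  set e := stereographicHomeomorph v
  set p : ({v}ᶜ : Set (sphere (0 : E) 1)) := ⟨-v, (ne_neg_of_mem_unit_sphere ℝ v).symm⟩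
  have hrank : 1 < Module.rank ℝ (ℝ ∙ (v : E))ᗮ := by
    have := Submodule.finrank_add_finrank_orthogonal (ℝ ∙ (v : E))
    rw [finrank_span_singleton (ne_zero_of_mem_unit_sphere v)] at this
    rw [← finrank_eq_rank]
    exact_mod_cast (by omega : 1 < finrank ℝ (ℝ ∙ (v : E))ᗮ)
  have himage : ({v}ᶜ ∩ {-v}ᶜ : Set (sphere (0 : E) 1)) = (↑) '' (e.symm '' {e p}ᶜ) := by
    rw [e.symm.image_compl, image_singleton, e.symm_apply_apply]
    ext x
    simp [p]
  rw [himage]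
  exact ((isConnected_compl_singleton_of_one_lt_rank hrank (e p)).isPreconnected.image _
    e.symm.continuous.continuousOn).image _ continuous_subtype_val.continuousOn

theorem hasContinuousLogOn_sphere [FiniteDimensional ℝ E] (hE : 2 < finrank ℝ E) {f : E → ℂ}
    (hf : ContinuousOn f (sphere 0 1)) (hf0 : ∀ x ∈ sphere (0 : E) 1, f x ≠ 0) :
    HasContinuousLogOn f (sphere (0 : E) 1) := by
  have : Nontrivial E := Module.nontrivial_of_finrank_pos (R := ℝ) (by omega)
  obtain ⟨v⟩ : Nonempty (sphere (0 : E) 1) :=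
    (NormedSpace.sphere_nonempty.mpr zero_le_one).to_subtype
  have hcover : ({v}ᶜ ∪ {-v}ᶜ : Set (sphere (0 : E) 1)) = univ := by
    have hv : v ∉ ({-v} : Set (sphere (0 : E) 1)) := by
      simpa using ne_neg_of_mem_unit_sphere ℝ v
    rw [← compl_inter, singleton_inter_eq_empty.mpr hv, compl_empty]
  have hg : ContinuousOn ((sphere (0 : E) 1).domRestrict f) univ :=
    (continuousOn_iff_continuous_domRestrict.mp hf).continuousOn
  apply hasContinuousLogOn_of_domRestrict
  rw [← hcover]
  exact HasContinuousLogOn.union_of_isOpen isOpen_compl_singleton isOpen_compl_singleton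
    (isPreconnected_sphere_compl_antipodal_pair hE v)
    (hasContinuousLogOn_of_simplyConnectedSpace (hg.mono (subset_univ _)) fun x _ ↦ hf0 x x.2)
    (hasContinuousLogOn_of_simplyConnectedSpace (hg.mono (subset_univ _)) fun x _ ↦ hf0 x x.2)

end Sphere

theorem sphere_unicoherent_general
    (S2 : Set (EuclideanSpace ℝ (Fin 3)))
    (hS2 : S2 = Metric.sphere (0 : EuclideanSpace ℝ (Fin 3)) 1)
    (A B : Set (EuclideanSpace ℝ (Fin 3)))
    (hAc : IsClosed A) (hBc : IsClosed B)
    (hAconn : IsConnected A) (hBconn : IsConnected B)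
    (hcover : A ∪ B = S2) :
    IsConnected (A ∩ B) := by
  subst hS2
  have hdim : 2 < finrank ℝ (EuclideanSpace ℝ (Fin 3)) := by simp
  have hconn : IsPreconnected (A ∪ B) := hcover ▸
    isPreconnected_sphere (by rw [← finrank_eq_rank]; exact_mod_cast hdim.trans' one_lt_two) 0 1
  obtain ⟨a, ha⟩ := hAconn.nonempty
  obtain ⟨b, hb⟩ := hBconn.nonempty
  have hne : (A ∩ B).Nonempty := (isPreconnected_closed_iff.mp hconn A B hAc hBc subset_rfl
    ⟨a, .inl ha, ha⟩ ⟨b, .inr hb, hb⟩).mono inter_subset_right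
  refine ⟨hne, isPreconnected_inter_of_hasContinuousLogOn_union hAc hBc hAconn.isPreconnected
    hBconn.isPreconnected fun f hf hf0 ↦ ?_⟩
  rw [hcover] at hf hf0 ⊢
  exact hasContinuousLogOn_sphere hdim hf hf0

/-- **Unicoherence of the 2-sphere.**
If `A` and `B` are closed connected subsets of the unit sphere `S²` in `ℝ³`
with `A ∪ B = S²`, then `A ∩ B` is connected. -/
theorem sphere_unicoherent
    (S2 : Set (EuclideanSpace ℝ (Fin 3)))
    (hS2 : S2 = Metric.sphere (0 : EuclideanSpace ℝ (Fin 3)) 1)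
    (A B : Set (EuclideanSpace ℝ (Fin 3)))
    (hAc : IsClosed A) (hBc : IsClosed B)
    (hAconn : IsConnected A) (hBconn : IsConnected B)
    (hAS : A ⊆ S2) (hBS : B ⊆ S2)
    (hcover : A ∪ B = S2) :
    IsConnected (A ∩ B) :=
  sphere_unicoherent_general S2 hS2 A B hAc hBc hAconn hBconn hcover
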